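/- arXiv:1602.05698 — 3 statements merged into one kernel-verified Lean document; each statement's English description precedes it below -/
import Mathlib

section
/- Let U ⊆ ℝ² be open and g : U → ℝ a C³ function. Define H(g) = g_xx·g_y² − 2·g_xy·g_x·g_y + g_yy·g_x² and the derivation L_u h = g_y·h_x − g_x·h_y along the vector field u = g_y·∂_x − g_x·∂_y. Then everywhere on U: L_u(H(g)) = g_xxx·g_y³ − 3·g_xxy·g_y²·g_x + 3·g_xyy·g_y·g_x² − g_yyy·g_x³. -/
/-- Partial derivative in the first variable of a function of two real variables. -/
noncomputable def px (h : ℝ → ℝ → ℝ) : ℝ → ℝ → ℝ := fun x y => deriv (fun t => h t y) x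

/-- Partial derivative in the second variable of a function of two real variables. -/
noncomputable def py (h : ℝ → ℝ → ℝ) : ℝ → ℝ → ℝ := fun x y => deriv (fun t => h x t) y

/-- `H(g) = g_xx·g_y² − 2·g_xy·g_x·g_y + g_yy·g_x²`. -/
noncomputable def Hfun (g : ℝ → ℝ → ℝ) : ℝ → ℝ → ℝ := fun x y =>
  px (px g) x y * (py g x y) ^ 2 - 2 * py (px g) x y * px g x y * py g x y
    + py (py g) x y * (px g x y) ^ 2

open Filter Topology Set Function

/-!
With `u = (g_y, -g_x) = J ∇g` (`J` the rotation by `-π/2`), `H(g) = D²g(u, u)`. Differentiating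
along `u` gives `L_u H(g) = D³g(u, u, u) + 2 D²g(u, L_u u)`, and `L_u u = J D²g u`, so the second
term is `2 (D²g u)ᵀ J (D²g u) = 0` by antisymmetry of `J`; expanding `D³g(u, u, u)` gives the
right-hand side. Both steps rely on the symmetry of the mixed partials of `g`, `g_x` and `g_y`,
which are at least `C²` on the open set `U`.
-/

section PartialDerivatives

variable {h : ℝ → ℝ → ℝ}

lemma hasDerivAt_fderiv_px {x y : ℝ} (hh : DifferentiableAt ℝ (uncurry h) (x, y)) :
    HasDerivAt (fun t => h t y) (fderiv ℝ (uncurry h) (x, y) (1, 0)) x :=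
  hh.hasFDerivAt.comp_hasDerivAt_of_eq x
    ((hasDerivAt_id' x).prodMk (hasDerivAt_const x y)) rfl

lemma hasDerivAt_fderiv_py {x y : ℝ} (hh : DifferentiableAt ℝ (uncurry h) (x, y)) :
    HasDerivAt (fun t => h x t) (fderiv ℝ (uncurry h) (x, y) (0, 1)) y :=
  hh.hasFDerivAt.comp_hasDerivAt_of_eq y
    ((hasDerivAt_const y x).prodMk (hasDerivAt_id' y)) rfl

lemma px_eq_fderiv {x y : ℝ} (hh : DifferentiableAt ℝ (uncurry h) (x, y)) :
    px h x y = fderiv ℝ (uncurry h) (x, y) (1, 0) :=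
  (hasDerivAt_fderiv_px hh).deriv

lemma py_eq_fderiv {x y : ℝ} (hh : DifferentiableAt ℝ (uncurry h) (x, y)) :
    py h x y = fderiv ℝ (uncurry h) (x, y) (0, 1) :=
  (hasDerivAt_fderiv_py hh).deriv

lemma hasDerivAt_px {x y : ℝ} (hh : DifferentiableAt ℝ (uncurry h) (x, y)) :
    HasDerivAt (fun t => h t y) (px h x y) x :=
  px_eq_fderiv hh ▸ hasDerivAt_fderiv_px hh

lemma hasDerivAt_py {x y : ℝ} (hh : DifferentiableAt ℝ (uncurry h) (x, y)) :
    HasDerivAt (fun t => h x t) (py h x y) y :=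
  py_eq_fderiv hh ▸ hasDerivAt_fderiv_py hh

lemma py_congr {h' : ℝ → ℝ → ℝ} {U : Set (ℝ × ℝ)} (hU : IsOpen U)
    (heq : ∀ a b, (a, b) ∈ U → h a b = h' a b) {x y : ℝ} (hp : (x, y) ∈ U) :
    py h x y = py h' x y := by
  have hslice : ∀ᶠ t in 𝓝 y, (x, t) ∈ U :=
    (continuous_const.prodMk continuous_id).continuousAt.preimage_mem_nhds (hU.mem_nhds hp)
  exact EventuallyEq.deriv_eq (hslice.mono fun t ht => heq x t ht)

variable {U : Set (ℝ × ℝ)} {m n : WithTop ℕ∞}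

lemma eqOn_uncurry_px (hU : IsOpen U) (hh : ContDiffOn ℝ n (uncurry h) U) (hn : 1 ≤ n) :
    EqOn (uncurry (px h)) (fun q => fderiv ℝ (uncurry h) q (1, 0)) U := fun _ hq =>
  px_eq_fderiv ((hh.differentiableOn (one_pos.trans_le hn).ne').differentiableAt
    (hU.mem_nhds hq))

lemma eqOn_uncurry_py (hU : IsOpen U) (hh : ContDiffOn ℝ n (uncurry h) U) (hn : 1 ≤ n) :
    EqOn (uncurry (py h)) (fun q => fderiv ℝ (uncurry h) q (0, 1)) U := fun _ hq =>
  py_eq_fderiv ((hh.differentiableOn (one_pos.trans_le hn).ne').differentiableAt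
    (hU.mem_nhds hq))

lemma contDiffOn_px (hU : IsOpen U) (hh : ContDiffOn ℝ n (uncurry h) U) (hmn : m + 1 ≤ n) :
    ContDiffOn ℝ m (uncurry (px h)) U :=
  ((hh.fderiv_of_isOpen hU hmn).clm_apply contDiffOn_const).congr
    (eqOn_uncurry_px hU hh (le_add_self.trans hmn))

lemma contDiffOn_py (hU : IsOpen U) (hh : ContDiffOn ℝ n (uncurry h) U) (hmn : m + 1 ≤ n) :
    ContDiffOn ℝ m (uncurry (py h)) U :=
  ((hh.fderiv_of_isOpen hU hmn).clm_apply contDiffOn_const).congr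
    (eqOn_uncurry_py hU hh (le_add_self.trans hmn))

end PartialDerivatives

section Schwarz

variable {h : ℝ → ℝ → ℝ} {U : Set (ℝ × ℝ)} {n : WithTop ℕ∞}

lemma fderiv_uncurry_px (hU : IsOpen U) (hh : ContDiffOn ℝ n (uncurry h) U) (hn : 2 ≤ n)
    {p : ℝ × ℝ} (hp : p ∈ U) (v : ℝ × ℝ) :
    fderiv ℝ (uncurry (px h)) p v = fderiv ℝ (fderiv ℝ (uncurry h)) p v (1, 0) := by
  have hd : DifferentiableAt ℝ (fderiv ℝ (uncurry h)) p :=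
    ((hh.fderiv_of_isOpen hU (m := 1) hn).contDiffAt (hU.mem_nhds hp)).differentiableAt
      one_ne_zero
  have heq : uncurry (px h) =ᶠ[𝓝 p] fun q => fderiv ℝ (uncurry h) q (1, 0) :=
    eventuallyEq_of_mem (hU.mem_nhds hp) (eqOn_uncurry_px hU hh (one_le_two.trans hn))
  rw [heq.fderiv_eq, fderiv_clm_apply hd (differentiableAt_const _)]
  simp

lemma fderiv_uncurry_py (hU : IsOpen U) (hh : ContDiffOn ℝ n (uncurry h) U) (hn : 2 ≤ n)
    {p : ℝ × ℝ} (hp : p ∈ U) (v : ℝ × ℝ) :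
    fderiv ℝ (uncurry (py h)) p v = fderiv ℝ (fderiv ℝ (uncurry h)) p v (0, 1) := by
  have hd : DifferentiableAt ℝ (fderiv ℝ (uncurry h)) p :=
    ((hh.fderiv_of_isOpen hU (m := 1) hn).contDiffAt (hU.mem_nhds hp)).differentiableAt
      one_ne_zero
  have heq : uncurry (py h) =ᶠ[𝓝 p] fun q => fderiv ℝ (uncurry h) q (0, 1) :=
    eventuallyEq_of_mem (hU.mem_nhds hp) (eqOn_uncurry_py hU hh (one_le_two.trans hn))
  rw [heq.fderiv_eq, fderiv_clm_apply hd (differentiableAt_const _)]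
  simp

lemma py_px_eq_px_py (hU : IsOpen U) (hh : ContDiffOn ℝ n (uncurry h) U) (hn : 2 ≤ n)
    {x y : ℝ} (hp : (x, y) ∈ U) : py (px h) x y = px (py h) x y := by
  have hpx : DifferentiableAt ℝ (uncurry (px h)) (x, y) :=
    ((contDiffOn_px hU hh (m := 1) hn).contDiffAt (hU.mem_nhds hp)).differentiableAt one_ne_zero
  have hpy : DifferentiableAt ℝ (uncurry (py h)) (x, y) :=
    ((contDiffOn_py hU hh (m := 1) hn).contDiffAt (hU.mem_nhds hp)).differentiableAt one_ne_zero
  have hsymm : IsSymmSndFDerivAt ℝ (uncurry h) (x, y) :=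
    (hh.contDiffAt (hU.mem_nhds hp)).isSymmSndFDerivAt (by simpa using hn)
  calc py (px h) x y = fderiv ℝ (uncurry (px h)) (x, y) (0, 1) := py_eq_fderiv hpx
    _ = fderiv ℝ (fderiv ℝ (uncurry h)) (x, y) (0, 1) (1, 0) := fderiv_uncurry_px hU hh hn hp _
    _ = fderiv ℝ (fderiv ℝ (uncurry h)) (x, y) (1, 0) (0, 1) := hsymm _ _
    _ = fderiv ℝ (uncurry (py h)) (x, y) (1, 0) := (fderiv_uncurry_py hU hh hn hp _).symm
    _ = px (py h) x y := (px_eq_fderiv hpy).symm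

end Schwarz

lemma HasDerivAt.binaryQuadratic {a b c p q : ℝ → ℝ} {a' b' c' p' q' t : ℝ}
    (ha : HasDerivAt a a' t) (hb : HasDerivAt b b' t) (hc : HasDerivAt c c' t)
    (hp : HasDerivAt p p' t) (hq : HasDerivAt q q' t) :
    HasDerivAt (fun s => a s * q s ^ 2 - 2 * b s * p s * q s + c s * p s ^ 2)
      (a' * q t ^ 2 - 2 * b' * p t * q t + c' * p t ^ 2
        + 2 * (a t * q t * q' - b t * (p' * q t + p t * q') + c t * p t * p')) t := by
  refine (((ha.fun_mul (hq.fun_pow 2)).fun_sub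
    (((hb.const_mul 2).fun_mul hp).fun_mul hq)).fun_add (hc.fun_mul (hp.fun_pow 2))).congr_deriv ?_
  norm_num
  ring

section Hfun

variable {g : ℝ → ℝ → ℝ} {x y : ℝ}
  (hx : DifferentiableAt ℝ (uncurry (px g)) (x, y))
  (hy : DifferentiableAt ℝ (uncurry (py g)) (x, y))
  (hxx : DifferentiableAt ℝ (uncurry (px (px g))) (x, y))
  (hxy : DifferentiableAt ℝ (uncurry (py (px g))) (x, y))
  (hyy : DifferentiableAt ℝ (uncurry (py (py g))) (x, y))
include hx hy hxx hxy hyy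

lemma px_Hfun :
    px (Hfun g) x y = px (px (px g)) x y * py g x y ^ 2
      - 2 * px (py (px g)) x y * px g x y * py g x y + px (py (py g)) x y * px g x y ^ 2
      + 2 * (px (px g) x y * py g x y * px (py g) x y
        - py (px g) x y * (px (px g) x y * py g x y + px g x y * px (py g) x y)
        + py (py g) x y * px g x y * px (px g) x y) :=
  ((hasDerivAt_px hxx).binaryQuadratic (hasDerivAt_px hxy) (hasDerivAt_px hyy)
    (hasDerivAt_px hx) (hasDerivAt_px hy)).deriv

lemma py_Hfun :
    py (Hfun g) x y = py (px (px g)) x y * py g x y ^ 2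
      - 2 * py (py (px g)) x y * px g x y * py g x y + py (py (py g)) x y * px g x y ^ 2
      + 2 * (px (px g) x y * py g x y * py (py g) x y
        - py (px g) x y * (py (px g) x y * py g x y + px g x y * py (py g) x y)
        + py (py g) x y * px g x y * py (px g) x y) :=
  ((hasDerivAt_py hxx).binaryQuadratic (hasDerivAt_py hxy) (hasDerivAt_py hyy)
    (hasDerivAt_py hx) (hasDerivAt_py hy)).deriv

end Hfun

/-- for a `C³` function `g` on an open set `U ⊆ ℝ²`, the derivative of `H(g)`
along the Hamiltonian vector field `u = g_y·∂_x − g_x·∂_y` equals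
`g_xxx·g_y³ − 3·g_xxy·g_y²·g_x + 3·g_xyy·g_y·g_x² − g_yyy·g_x³` everywhere on `U`. -/
theorem stmt7 (U : Set (ℝ × ℝ)) (hU : IsOpen U) (g : ℝ → ℝ → ℝ)
    (hg : ContDiffOn ℝ 3 (fun q : ℝ × ℝ => g q.1 q.2) U) :
    ∀ x y : ℝ, (x, y) ∈ U →
      py g x y * px (Hfun g) x y - px g x y * py (Hfun g) x y
        = px (px (px g)) x y * (py g x y) ^ 3
          - 3 * py (px (px g)) x y * (py g x y) ^ 2 * px g x y
          + 3 * py (py (px g)) x y * py g x y * (px g x y) ^ 2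
          - py (py (py g)) x y * (px g x y) ^ 3 := by
  intro x y hp
  have hgx : ContDiffOn ℝ 2 (uncurry (px g)) U := contDiffOn_px hU hg (by norm_num)
  have hgy : ContDiffOn ℝ 2 (uncurry (py g)) U := contDiffOn_py hU hg (by norm_num)
  have hdiff {h : ℝ → ℝ → ℝ} (hh : ContDiffOn ℝ 1 (uncurry h) U) :
      DifferentiableAt ℝ (uncurry h) (x, y) :=
    (hh.contDiffAt (hU.mem_nhds hp)).differentiableAt one_ne_zero
  have hx := hdiff (hgx.of_le one_le_two)
  have hy := hdiff (hgy.of_le one_le_two)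
  have hxx := hdiff (contDiffOn_px hU hgx le_rfl)
  have hxy := hdiff (contDiffOn_py hU hgx le_rfl)
  have hyy := hdiff (contDiffOn_py hU hgy le_rfl)
  have hyyx : py (px (py g)) x y = py (py (px g)) x y :=
    py_congr hU (fun _ _ hq => (py_px_eq_px_py hU hg (by norm_num) hq).symm) hp
  rw [px_Hfun hx hy hxx hxy hyy, py_Hfun hx hy hxx hxy hyy,
    ← py_px_eq_px_py hU hg (by norm_num) hp, ← py_px_eq_px_py hU hgx le_rfl hp,
    ← py_px_eq_px_py hU hgy le_rfl hp, hyyx]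
  ring
end

section
/- Let U ⊆ ℝ² be open, g : U → ℝ a C³ function, p ∈ ℝ, I an interval, and σ : I → U a C¹ curve such that for all t ∈ I: g(σ(t)) = 0, ∇g(σ(t)) ≠ 0, and σ₁(t)² + σ₂(t)² − 1 > 0. Suppose that at every point (x,y) = σ(t): (x²+y²−1)·(g_y·∂_x(H(g)) − g_x·∂_y(H(g))) + 3·(2−p)·H(g)·(x·g_y − y·g_x) = 0, where H(g) = g_xx·g_y² − 2·g_xy·g_x·g_y + g_yy·g_x². Then the function t ↦ H(g)(σ(t))·(σ₁(t)²+σ₂(t)²−1)^{(6−3p)/2} is constant on I; equivalently, there is a constant c with H(g)(σ(t)) = c·(σ₁(t)²+σ₂(t)²−1)^{(3p−6)/2} for all t ∈ I. -/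
lemma ContinuousLinearMap.apply_eq_fst_mul_add_snd_mul (L : ℝ × ℝ →L[ℝ] ℝ) (v : ℝ × ℝ) :
    L v = v.1 * L (1, 0) + v.2 * L (0, 1) := by
  have hv : v = v.1 • ((1 : ℝ), (0 : ℝ)) + v.2 • ((0 : ℝ), (1 : ℝ)) := by
    ext <;> simp
  conv_lhs => rw [hv, map_add, map_smul, map_smul, smul_eq_mul, smul_eq_mul]

section Partials

variable {f : ℝ → ℝ → ℝ}

lemma px_eq_fderiv_apply {q : ℝ × ℝ}
    (hf : DifferentiableAt ℝ (fun q : ℝ × ℝ => f q.1 q.2) q) :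
    px f q.1 q.2 = fderiv ℝ (fun q : ℝ × ℝ => f q.1 q.2) q (1, 0) :=
  have hline : HasDerivAt (fun s : ℝ => (s, q.2)) ((1 : ℝ), (0 : ℝ)) q.1 :=
    (hasDerivAt_id q.1).prodMk (hasDerivAt_const q.1 q.2)
  (hf.hasFDerivAt.comp_hasDerivAt q.1 hline :).deriv

lemma py_eq_fderiv_apply {q : ℝ × ℝ}
    (hf : DifferentiableAt ℝ (fun q : ℝ × ℝ => f q.1 q.2) q) :
    py f q.1 q.2 = fderiv ℝ (fun q : ℝ × ℝ => f q.1 q.2) q (0, 1) :=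
  have hline : HasDerivAt (fun s : ℝ => (q.1, s)) ((0 : ℝ), (1 : ℝ)) q.2 :=
    (hasDerivAt_const q.2 q.1).prodMk (hasDerivAt_id q.2)
  (hf.hasFDerivAt.comp_hasDerivAt q.2 hline :).deriv

variable {U : Set (ℝ × ℝ)} {m n : WithTop ℕ∞}

lemma ContDiffOn.px (hf : ContDiffOn ℝ n (fun q : ℝ × ℝ => f q.1 q.2) U) (hU : IsOpen U)
    (hmn : m + 1 ≤ n) : ContDiffOn ℝ m (fun q : ℝ × ℝ => px f q.1 q.2) U :=
  ((hf.fderiv_of_isOpen hU hmn).clm_apply contDiffOn_const).congr fun q hq =>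
    px_eq_fderiv_apply ((hf.contDiffAt (hU.mem_nhds hq)).differentiableAt
      (lt_of_lt_of_le (by simp) hmn).ne')

lemma ContDiffOn.py (hf : ContDiffOn ℝ n (fun q : ℝ × ℝ => f q.1 q.2) U) (hU : IsOpen U)
    (hmn : m + 1 ≤ n) : ContDiffOn ℝ m (fun q : ℝ × ℝ => py f q.1 q.2) U :=
  ((hf.fderiv_of_isOpen hU hmn).clm_apply contDiffOn_const).congr fun q hq =>
    py_eq_fderiv_apply ((hf.contDiffAt (hU.mem_nhds hq)).differentiableAt
      (lt_of_lt_of_le (by simp) hmn).ne')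

lemma ContDiffOn.hfun (hf : ContDiffOn ℝ n (fun q : ℝ × ℝ => f q.1 q.2) U) (hU : IsOpen U)
    (hmn : m + 2 ≤ n) : ContDiffOn ℝ m (fun q : ℝ × ℝ => Hfun f q.1 q.2) U := by
  have hmn' : m + 1 + 1 ≤ n := by rwa [add_assoc, one_add_one_eq_two]
  have fx := hf.px hU hmn'
  have fy := hf.py hU hmn'
  have fx' := fx.of_le le_self_add
  have fy' := fy.of_le le_self_add
  exact ((fx.px hU le_rfl).mul (fy'.pow 2)).sub
    (((contDiffOn_const.mul (fx.py hU le_rfl)).mul fx').mul fy') |>.add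
    ((fy.py hU le_rfl).mul (fx'.pow 2))

end Partials

lemma exists_eq_mul_of_mul_add_mul_eq_zero {a b x y : ℝ} (hab : (a, b) ≠ (0, 0))
    (h : a * x + b * y = 0) : ∃ l, x = l * b ∧ y = -(l * a) := by
  have hden : a ^ 2 + b ^ 2 ≠ 0 := by
    intro h0
    apply hab
    ext <;> simp <;> nlinarith [sq_nonneg a, sq_nonneg b]
  refine ⟨(x * b - y * a) / (a ^ 2 + b ^ 2), ?_, ?_⟩
  · field_simp
    linear_combination a * h
  · field_simp
    linear_combination b * h

section Curves

variable {σ : ℝ → ℝ × ℝ} {v : ℝ × ℝ} {s : Set ℝ} {t : ℝ}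

lemma hasDerivWithinAt_uncurry_comp {f : ℝ → ℝ → ℝ}
    (hf : DifferentiableAt ℝ (fun q : ℝ × ℝ => f q.1 q.2) (σ t))
    (hσ : HasDerivWithinAt σ v s t) :
    HasDerivWithinAt (fun τ => f (σ τ).1 (σ τ).2)
      (px f (σ t).1 (σ t).2 * v.1 + py f (σ t).1 (σ t).2 * v.2) s t := by
  refine (hf.hasFDerivAt.comp_hasDerivWithinAt t hσ).congr_deriv ?_
  rw [ContinuousLinearMap.apply_eq_fst_mul_add_snd_mul, px_eq_fderiv_apply hf,
    py_eq_fderiv_apply hf]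
  ring

lemma px_mul_add_py_mul_eq_zero_of_forall_eq_zero {g : ℝ → ℝ → ℝ}
    (hg : DifferentiableAt ℝ (fun q : ℝ × ℝ => g q.1 q.2) (σ t))
    (hσ : HasDerivWithinAt σ v s t) (hts : t ∈ s) (ht : AccPt t (Filter.principal s))
    (hg0 : ∀ τ ∈ s, g (σ τ).1 (σ τ).2 = 0) :
    px g (σ t).1 (σ t).2 * v.1 + py g (σ t).1 (σ t).2 * v.2 = 0 :=
  ht.uniqueDiffWithinAt.eq_deriv s (hasDerivWithinAt_uncurry_comp hg hσ)
    ((hasDerivWithinAt_const t s 0).congr hg0 (hg0 t hts))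

lemma hasDerivWithinAt_sq_add_sq_sub_one_rpow (a : ℝ) (hσ : HasDerivWithinAt σ v s t)
    (hr : (σ t).1 ^ 2 + (σ t).2 ^ 2 - 1 ≠ 0) :
    HasDerivWithinAt (fun τ => ((σ τ).1 ^ 2 + (σ τ).2 ^ 2 - 1) ^ a)
      (a * ((σ t).1 ^ 2 + (σ t).2 ^ 2 - 1) ^ (a - 1) * (2 * ((σ t).1 * v.1 + (σ t).2 * v.2)))
      s t := by
  have h1 : HasDerivWithinAt (fun τ => (σ τ).1) v.1 s t :=
    (hasFDerivAt_fst (𝕜 := ℝ) (p := σ t)).comp_hasDerivWithinAt t hσ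
  have h2 : HasDerivWithinAt (fun τ => (σ τ).2) v.2 s t :=
    (hasFDerivAt_snd (𝕜 := ℝ) (p := σ t)).comp_hasDerivWithinAt t hσ
  refine ((((h1.fun_pow 2).fun_add (h2.fun_pow 2)).sub_const 1).rpow_const
    (Or.inl hr)).congr_deriv ?_
  push_cast
  ring

lemma hasDerivWithinAt_mul_sq_add_sq_sub_one_rpow_eq_zero {g F : ℝ → ℝ → ℝ} {a : ℝ}
    (hg : DifferentiableAt ℝ (fun q : ℝ × ℝ => g q.1 q.2) (σ t))
    (hF : DifferentiableAt ℝ (fun q : ℝ × ℝ => F q.1 q.2) (σ t))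
    (hσ : DifferentiableWithinAt ℝ σ s t) (hts : t ∈ s)
    (hg0 : ∀ τ ∈ s, g (σ τ).1 (σ τ).2 = 0)
    (hgrad : (px g (σ t).1 (σ t).2, py g (σ t).1 (σ t).2) ≠ (0, 0))
    (hr : (σ t).1 ^ 2 + (σ t).2 ^ 2 - 1 ≠ 0)
    (hpde : ((σ t).1 ^ 2 + (σ t).2 ^ 2 - 1) *
          (py g (σ t).1 (σ t).2 * px F (σ t).1 (σ t).2
            - px g (σ t).1 (σ t).2 * py F (σ t).1 (σ t).2)
        + 2 * a * F (σ t).1 (σ t).2 *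
            ((σ t).1 * py g (σ t).1 (σ t).2 - (σ t).2 * px g (σ t).1 (σ t).2) = 0) :
    HasDerivWithinAt (fun τ => F (σ τ).1 (σ τ).2 * ((σ τ).1 ^ 2 + (σ τ).2 ^ 2 - 1) ^ a)
      0 s t := by
  by_cases hacc : AccPt t (Filter.principal s)
  swap
  · -- at an isolated point of `s` every value is a derivative within `s`
    exact HasFDerivWithinAt.of_not_accPt hacc
  have hv := hσ.hasDerivWithinAt
  obtain ⟨l, hv1, hv2⟩ := exists_eq_mul_of_mul_add_mul_eq_zero hgrad
    (px_mul_add_py_mul_eq_zero_of_forall_eq_zero hg hv hts hacc hg0)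
  refine ((hasDerivWithinAt_uncurry_comp hF hv).mul
    (hasDerivWithinAt_sq_add_sq_sub_one_rpow a hv hr)).congr_deriv ?_
  generalize (σ t).1 ^ 2 + (σ t).2 ^ 2 - 1 = r at hr hpde ⊢
  have hra : r ^ a = r ^ (a - 1) * r := by rw [← Real.rpow_add_one hr]; norm_num
  rw [hv1, hv2, hra]
  linear_combination (l * r ^ (a - 1)) * hpde

end Curves

lemma Convex.exists_eq_const_of_hasDerivWithinAt_zero {s : Set ℝ} {f : ℝ → ℝ}
    (hs : Convex ℝ s) (hf : ∀ x ∈ s, HasDerivWithinAt f 0 s x) : ∃ c, ∀ x ∈ s, f x = c := by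
  rcases s.eq_empty_or_nonempty with rfl | ⟨x₀, hx₀⟩
  · exact ⟨0, by simp⟩
  refine ⟨f x₀, fun x hx => ?_⟩
  have h := hs.norm_image_sub_le_of_norm_hasDerivWithin_le (C := 0) hf (by simp) hx₀ hx
  simpa [sub_eq_zero] using h

/-- hyperbolic case: if along a `C¹` curve `σ` in the zero set of `g` (with
nonvanishing gradient) the identity
`(x²+y²−1)·L_u(H(g)) + 3(2−p)·H(g)·(x·g_y − y·g_x) = 0` holds, then
`H(g) = c·(x²+y²−1)^{(3p−6)/2}` along `σ` for some constant `c`. -/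
theorem stmt10 (U : Set (ℝ × ℝ)) (hU : IsOpen U) (g : ℝ → ℝ → ℝ)
    (hg : ContDiffOn ℝ 3 (fun q : ℝ × ℝ => g q.1 q.2) U)
    (p : ℝ) (I : Set ℝ) (hI : Convex ℝ I)
    (σ : ℝ → ℝ × ℝ) (hσ : ContDiffOn ℝ 1 σ I)
    (hmem : ∀ t ∈ I, σ t ∈ U)
    (hg0 : ∀ t ∈ I, g (σ t).1 (σ t).2 = 0)
    (hpos : ∀ t ∈ I, 0 < (σ t).1 ^ 2 + (σ t).2 ^ 2 - 1)
    (hgrad : ∀ t ∈ I, (px g (σ t).1 (σ t).2, py g (σ t).1 (σ t).2) ≠ (0, 0))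
    (hpde : ∀ t ∈ I,
      ((σ t).1 ^ 2 + (σ t).2 ^ 2 - 1) *
          (py g (σ t).1 (σ t).2 * px (Hfun g) (σ t).1 (σ t).2
            - px g (σ t).1 (σ t).2 * py (Hfun g) (σ t).1 (σ t).2)
        + 3 * (2 - p) * Hfun g (σ t).1 (σ t).2 *
            ((σ t).1 * py g (σ t).1 (σ t).2 - (σ t).2 * px g (σ t).1 (σ t).2) = 0) :
    (∃ c : ℝ, ∀ t ∈ I,
        Hfun g (σ t).1 (σ t).2 * ((σ t).1 ^ 2 + (σ t).2 ^ 2 - 1) ^ ((6 - 3 * p) / 2) = c) ∧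
    (∃ c : ℝ, ∀ t ∈ I,
        Hfun g (σ t).1 (σ t).2 = c * ((σ t).1 ^ 2 + (σ t).2 ^ 2 - 1) ^ ((3 * p - 6) / 2)) := by
  have hH : ContDiffOn ℝ 1 (fun q : ℝ × ℝ => Hfun g q.1 q.2) U := hg.hfun hU (by norm_num)
  have hdiff {f : ℝ → ℝ → ℝ} (hf : ContDiffOn ℝ 1 (fun q : ℝ × ℝ => f q.1 q.2) U) (t : ℝ)
      (ht : t ∈ I) : DifferentiableAt ℝ (fun q : ℝ × ℝ => f q.1 q.2) (σ t) :=
    (hf.contDiffAt (hU.mem_nhds (hmem t ht))).differentiableAt one_ne_zero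
  obtain ⟨c, hc⟩ := hI.exists_eq_const_of_hasDerivWithinAt_zero fun t ht =>
    hasDerivWithinAt_mul_sq_add_sq_sub_one_rpow_eq_zero (a := (6 - 3 * p) / 2)
      (hdiff (hg.of_le (by norm_num)) t ht) (hdiff hH t ht)
      (hσ.differentiableOn one_ne_zero t ht) ht hg0 (hgrad t ht) (hpos t ht).ne'
      (by linear_combination hpde t ht)
  refine ⟨⟨c, hc⟩, c, fun t ht => ?_⟩
  rw [← hc t ht, show (3 * p - 6) / 2 = -((6 - 3 * p) / 2) by ring,
    Real.rpow_neg (hpos t ht).le, mul_assoc,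
    mul_inv_cancel₀ (Real.rpow_pos_of_pos (hpos t ht) _).ne', mul_one]
end

section
/- Let q(x) = x₁² + x₂² − x₃² with associated bilinear form B(a,b) = a₁b₁ + a₂b₂ − a₃b₃. Let I be an open interval, γ : I → ℝ³ a C² curve with q(γ(s)) = −1 and q(γ'(s)) = 1 for all s ∈ I (a Minkowski-unit-speed curve on the hyperboloid), and Ψ : ℝ³ → ℝ a homogeneous polynomial of degree n. Suppose that for every s ∈ I and every pair of vectors v₋, v₊ ∈ ℝ³ with q(v₋) = q(v₊) = 1, B(v₋, γ(s)) = B(v₊, γ(s)) = 0, and B(v₊, γ'(s)) = B(v₋, γ'(s)), one has Ψ(γ(s) × v₋) = Ψ(γ(s) × v₊). Then the dual curve Γ = γ × γ' satisfies Ψ(Γ(s) − ε·Γ'(s)) = Ψ(Γ(s) + ε·Γ'(s)) for every s ∈ I and every ε ∈ ℝ. -/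
/-!
Differentiating `q(γ) = -1` and `q(γ') = 1` gives `B(γ, γ') = 0`, `B(γ', γ'') = 0` and
`B(γ, γ'') = -1`, so `w = γ'' - γ` is Minkowski-orthogonal to `γ` and `γ'`. It lies in the
tangent plane of the hyperboloid at `γ`, which is spacelike, so `q(w) ≥ 0`. Since
`γ' × γ' = γ × γ = 0`, the dual curve has `Γ' = γ × γ'' = γ × w`.
For `c = (1 + ε² q(w))^(-1/2)` the vectors `v± = c (γ' ± ε w)` are unit tangent vectors at `γ`
with `B(v±, γ') = c`, i.e. a pair related by the reflection law. As `γ × v± = c (Γ ± ε Γ')` and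
`Ψ` is homogeneous, reflection invariance reads `cⁿ Ψ(Γ + ε Γ') = cⁿ Ψ(Γ - ε Γ')`.
-/

open MvPolynomial

/-- The standard cross product on `ℝ³`. -/
def cross3 (a b : Fin 3 → ℝ) : Fin 3 → ℝ :=
  ![a 1 * b 2 - a 2 * b 1, a 2 * b 0 - a 0 * b 2, a 0 * b 1 - a 1 * b 0]

/-- The Minkowski bilinear form `B(a,b) = a₁b₁ + a₂b₂ − a₃b₃` on `ℝ³`. -/
def minkB (a b : Fin 3 → ℝ) : ℝ := a 0 * b 0 + a 1 * b 1 - a 2 * b 2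

open Filter Topology

theorem MvPolynomial.IsHomogeneous.eval_smul {σ R : Type*} [Fintype σ] [CommSemiring R]
    {φ : MvPolynomial σ R} {n : ℕ} (hφ : φ.IsHomogeneous n) (c : R) (x : σ → R) :
    eval (c • x) φ = c ^ n * eval x φ := by
  rw [eval_eq', eval_eq', Finset.mul_sum]
  refine Finset.sum_congr rfl fun d hd => ?_
  have hdeg : ∑ i, d i = n := by
    rw [← Finsupp.degree_eq_sum, Finsupp.degree_eq_weight_one]
    exact hφ (mem_support_iff.mp hd)
  simp only [Pi.smul_apply, smul_eq_mul, mul_pow, Finset.prod_mul_distrib,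
    Finset.prod_pow_eq_pow_sum, hdeg]
  ring

section Bilinear

variable {𝕜 E F G : Type*} [NontriviallyNormedField 𝕜] [CompleteSpace 𝕜]
  [NormedAddCommGroup E] [NormedSpace 𝕜 E] [FiniteDimensional 𝕜 E]
  [NormedAddCommGroup F] [NormedSpace 𝕜 F] [FiniteDimensional 𝕜 F]
  [NormedAddCommGroup G] [NormedSpace 𝕜 G] {B : E → F → G}
  {u : 𝕜 → E} {v : 𝕜 → F} {u' : E} {v' : F} {x : 𝕜}

theorem IsBilinearMap.hasDerivAt (hB : IsBilinearMap 𝕜 B) (hu : HasDerivAt u u' x)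
    (hv : HasDerivAt v v' x) :
    HasDerivAt (fun t => B (u t) (v t)) (B u' (v x) + B (u x) v') x := by
  simpa [add_comm] using
    (hB.toContinuousBilinearMap.hasFDerivAt_of_bilinear hu.hasFDerivAt hv.hasFDerivAt).hasDerivAt

theorem IsBilinearMap.add_eq_zero_of_eventually_eq (hB : IsBilinearMap 𝕜 B) {c : G}
    (hu : HasDerivAt u u' x) (hv : HasDerivAt v v' x) (hc : ∀ᶠ t in 𝓝 x, B (u t) (v t) = c) :
    B u' (v x) + B (u x) v' = 0 :=
  (hB.hasDerivAt hu hv).unique ((hasDerivAt_const x c).congr_of_eventuallyEq hc)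

end Bilinear

theorem isBilinearMap_minkB : IsBilinearMap ℝ minkB where
  add_left _ _ _ := by simp only [minkB, Pi.add_apply]; ring
  smul_left _ _ _ := by simp only [minkB, Pi.smul_apply, smul_eq_mul]; ring
  add_right _ _ _ := by simp only [minkB, Pi.add_apply]; ring
  smul_right _ _ _ := by simp only [minkB, Pi.smul_apply, smul_eq_mul]; ring

theorem cross3_eq_crossProduct (a b : Fin 3 → ℝ) : cross3 a b = crossProduct a b := rfl

theorem isBilinearMap_cross3 : IsBilinearMap ℝ cross3 where
  add_left _ _ _ := by simp only [cross3_eq_crossProduct, map_add, LinearMap.add_apply]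
  smul_left _ _ _ := by simp only [cross3_eq_crossProduct, map_smul, LinearMap.smul_apply]
  add_right _ _ _ := by simp only [cross3_eq_crossProduct, map_add]
  smul_right _ _ _ := by simp only [cross3_eq_crossProduct, map_smul]

theorem minkB_comm (a b : Fin 3 → ℝ) : minkB a b = minkB b a := by
  unfold minkB; ring

theorem minkB_eq_zero_of_eventually_minkB_self_eq {f : ℝ → Fin 3 → ℝ} {f' : Fin 3 → ℝ}
    {s c : ℝ} (hf : HasDerivAt f f' s) (hc : ∀ᶠ t in 𝓝 s, minkB (f t) (f t) = c) :
    minkB (f s) f' = 0 := by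
  have h := isBilinearMap_minkB.add_eq_zero_of_eventually_eq hf hf hc
  rw [minkB_comm] at h
  linarith

theorem minkB_self_nonneg_of_minkB_eq_zero {g w : Fin 3 → ℝ} (hg : minkB g g < 0)
    (hwg : minkB w g = 0) : 0 ≤ minkB w w := by
  unfold minkB at *
  have hg2 : 0 < g 2 ^ 2 := by nlinarith [sq_nonneg (g 0), sq_nonneg (g 1)]
  have key : (w 0 * w 0 + w 1 * w 1 - w 2 * w 2) * g 2 ^ 2 = (w 0 * g 1 - w 1 * g 0) ^ 2
      - (w 0 ^ 2 + w 1 ^ 2) * (g 0 * g 0 + g 1 * g 1 - g 2 * g 2) := by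
    linear_combination (w 0 * g 0 + w 1 * g 1 + w 2 * g 2) * hwg
  refine nonneg_of_mul_nonneg_left ?_ hg2
  rw [key]
  nlinarith [sq_nonneg (w 0 * g 1 - w 1 * g 0), sq_nonneg (w 0), sq_nonneg (w 1)]

theorem eval_cross3_sub_smul_eq_eval_cross3_add_smul {n : ℕ} {Ψ : MvPolynomial (Fin 3) ℝ}
    (hΨ : Ψ.IsHomogeneous n) {g g' g'' : Fin 3 → ℝ} (hg : minkB g g = -1)
    (hg' : minkB g' g' = 1) (hgg' : minkB g g' = 0) (hg'g'' : minkB g' g'' = 0)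
    (hgg'' : minkB g g'' = -1)
    (hrefl : ∀ vm vp : Fin 3 → ℝ, minkB vm vm = 1 → minkB vp vp = 1 → minkB vm g = 0 →
      minkB vp g = 0 → minkB vp g' = minkB vm g' → eval (cross3 g vm) Ψ = eval (cross3 g vp) Ψ)
    (ε : ℝ) :
    eval (cross3 g g' - ε • cross3 g g'') Ψ = eval (cross3 g g' + ε • cross3 g g'') Ψ := by
  set w := g'' - g
  have hwg : minkB w g = 0 := by
    simp only [w, minkB, Pi.sub_apply] at hg hgg'' ⊢
    linear_combination hgg'' - hg
  have hwg' : minkB w g' = 0 := by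
    simp only [w, minkB, Pi.sub_apply] at hgg' hg'g'' ⊢
    linear_combination hg'g'' - hgg'
  have hww : 0 ≤ minkB w w := minkB_self_nonneg_of_minkB_eq_zero (by rw [hg]; norm_num) hwg
  obtain ⟨c, hc, hc2⟩ : ∃ c : ℝ, 0 < c ∧ c ^ 2 * (1 + ε ^ 2 * minkB w w) = 1 :=
    ⟨(√(1 + ε ^ 2 * minkB w w))⁻¹, by positivity, by
      rw [inv_pow, Real.sq_sqrt (by positivity), inv_mul_cancel₀ (by positivity)]⟩
  have hB := isBilinearMap_minkB
  have hunit : ∀ δ : ℝ, δ ^ 2 = ε ^ 2 → minkB (c • (g' + δ • w)) (c • (g' + δ • w)) = 1 := by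
    intro δ hδ
    simp only [hB.add_left, hB.add_right, hB.smul_left, hB.smul_right, smul_eq_mul,
      minkB_comm g' w, hwg', hg']
    linear_combination c ^ 2 * minkB w w * hδ + hc2
  have htan : ∀ δ : ℝ, minkB (c • (g' + δ • w)) g = 0 := by
    intro δ
    simp only [hB.add_left, hB.smul_left, smul_eq_mul, minkB_comm g' g, hgg', hwg]
    ring
  have hangle : ∀ δ : ℝ, minkB (c • (g' + δ • w)) g' = c := by
    intro δ
    simp only [hB.add_left, hB.smul_left, smul_eq_mul, hg', hwg']
    ring
  have hmom : ∀ δ : ℝ, eval (cross3 g (c • (g' + δ • w))) Ψ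
      = c ^ n * eval (cross3 g g' + δ • cross3 g g'') Ψ := by
    intro δ
    have hgw : cross3 g w = cross3 g g'' := by
      simp only [w, cross3_eq_crossProduct, map_sub, cross_self, sub_zero]
    rw [isBilinearMap_cross3.smul_right, isBilinearMap_cross3.add_right,
      isBilinearMap_cross3.smul_right, hgw, hΨ.eval_smul]
  have key := hrefl _ _ (hunit ε rfl) (hunit (-ε) (neg_sq ε)) (htan ε) (htan (-ε))
    (by rw [hangle, hangle])
  rw [hmom, hmom, neg_smul, ← sub_eq_add_neg] at key
  exact (mul_left_cancel₀ (pow_ne_zero n hc.ne') key).symm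

/-- hyperbolic case: if a homogeneous polynomial `Ψ` of degree `n`, evaluated
on momenta `M = r × v`, is invariant under the Birkhoff billiard reflection law along a
Minkowski-unit-speed `C²` curve `γ` on the hyperboloid `{q = −1}`, then `Ψ` satisfies the
outer-billiard symmetry identity `Ψ(Γ − εΓ') = Ψ(Γ + εΓ')` along the dual curve
`Γ = γ × γ'`. -/
theorem stmt14 (a b : ℝ) (γ : ℝ → Fin 3 → ℝ)
    (hγ : ContDiffOn ℝ 2 γ (Set.Ioo a b))
    (hhyp : ∀ s ∈ Set.Ioo a b, minkB (γ s) (γ s) = -1)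
    (hspeed : ∀ s ∈ Set.Ioo a b, minkB (deriv γ s) (deriv γ s) = 1)
    (n : ℕ) (Ψ : MvPolynomial (Fin 3) ℝ) (hΨ : Ψ.IsHomogeneous n)
    (hrefl : ∀ s ∈ Set.Ioo a b, ∀ vm vp : Fin 3 → ℝ,
      minkB vm vm = 1 → minkB vp vp = 1 →
      minkB vm (γ s) = 0 → minkB vp (γ s) = 0 →
      minkB vp (deriv γ s) = minkB vm (deriv γ s) →
      eval (cross3 (γ s) vm) Ψ = eval (cross3 (γ s) vp) Ψ) :
    ∀ s ∈ Set.Ioo a b, ∀ ε : ℝ,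
      eval (cross3 (γ s) (deriv γ s)
          - ε • deriv (fun t => cross3 (γ t) (deriv γ t)) s) Ψ
        = eval (cross3 (γ s) (deriv γ s)
            + ε • deriv (fun t => cross3 (γ t) (deriv γ t)) s) Ψ := by
  intro s hs ε
  have hI : Set.Ioo a b ∈ 𝓝 s := isOpen_Ioo.mem_nhds hs
  have hγ' : ∀ u ∈ Set.Ioo a b, HasDerivAt γ (deriv γ u) u := fun u hu =>
    ((hγ.differentiableOn (by norm_num)).differentiableAt (isOpen_Ioo.mem_nhds hu)).hasDerivAt
  have hγ'' : HasDerivAt (deriv γ) (deriv (deriv γ) s) s :=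
    (((hγ.deriv_of_isOpen isOpen_Ioo (by norm_num : (1 : WithTop ℕ∞) + 1 ≤ 2)).differentiableOn
      one_ne_zero).differentiableAt hI).hasDerivAt
  have hγγ' : ∀ u ∈ Set.Ioo a b, minkB (γ u) (deriv γ u) = 0 := fun u hu =>
    minkB_eq_zero_of_eventually_minkB_self_eq (hγ' u hu)
      (eventually_of_mem (isOpen_Ioo.mem_nhds hu) hhyp)
  have hγ'γ'' : minkB (deriv γ s) (deriv (deriv γ) s) = 0 :=
    minkB_eq_zero_of_eventually_minkB_self_eq hγ'' (eventually_of_mem hI hspeed)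
  have hγγ'' : minkB (γ s) (deriv (deriv γ) s) = -1 := by
    have h := isBilinearMap_minkB.add_eq_zero_of_eventually_eq (hγ' s hs) hγ''
      (eventually_of_mem hI hγγ')
    rw [hspeed s hs] at h
    linarith
  have hΓ' : deriv (fun t => cross3 (γ t) (deriv γ t)) s = cross3 (γ s) (deriv (deriv γ) s) := by
    rw [(isBilinearMap_cross3.hasDerivAt (hγ' s hs) hγ'').deriv, cross3_eq_crossProduct,
      cross_self, zero_add]
  rw [hΓ']
  exact eval_cross3_sub_smul_eq_eval_cross3_add_smul hΨ (hhyp s hs) (hspeed s hs) (hγγ' s hs)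
    hγ'γ'' hγγ'' (hrefl s hs) ε
end
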